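/- Every differential operator D of order 1 and degree q on Ω can be written uniquely as D = L_K + i_L + λ_μ, where K ∈ Ω^q ⊗_S T, L ∈ Ω^{q+1} ⊗_S T are vector valued differential forms, μ ∈ Ω^q, L_K := [i_K, d], and λ_μ is left exterior multiplication by μ. -/

import Mathlib

/-!
Common setup: a concrete model of the exterior algebra `Ω` of differential forms over
`S = ℂ[x₁,…,xₙ]`.  An element of `Ω` is encoded as a function assigning to each subset
`I ⊆ {1,…,n}` the polynomial coefficient of `dx_I = dx_{i₁} ∧ … ∧ dx_{i_r}` (indices in
increasing order).  The `r`-forms are the elements supported on subsets of cardinality `r`.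
-/

open MvPolynomial

noncomputable section

/-- The polynomial ring `S = ℂ[x₁,…,xₙ]`. -/
abbrev S (n : ℕ) : Type := MvPolynomial (Fin n) ℂ

/-- The exterior algebra of differential forms over `S`: a form is given by its coefficient
at each basis monomial `dx_I`, `I ⊆ {1,…,n}`. -/
abbrev Ω (n : ℕ) : Type := Finset (Fin n) → S n

variable {n : ℕ}

/-- The sign `(-1)^{#{(i,j) ∈ I × J : j < i}}` arising when reordering `dx_I ∧ dx_J`. -/
def sgnMerge (I J : Finset (Fin n)) : ℤ :=
  (-1) ^ (∑ i ∈ I, (J.filter (fun j => j < i)).card)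

/-- Exterior (wedge) product of forms. -/
def wedge (μ τ : Ω n) : Ω n :=
  fun K => ∑ I ∈ K.powerset, (sgnMerge I (K \ I) : S n) * μ I * τ (K \ I)

/-- Contraction `i_X` with a vector field `X = Σ_k X_k ∂/∂x_k` (given by its components). -/
def contr (X : Fin n → S n) (τ : Ω n) : Ω n :=
  fun J => ∑ k ∈ Jᶜ, ((-1 : S n) ^ (J.filter (fun j => j < k)).card) * X k * τ (insert k J)

/-- The exterior differential `d`. -/
def extd (τ : Ω n) : Ω n :=
  fun I => ∑ k ∈ I, ((-1 : S n) ^ (I.filter (fun j => j < k)).card) * pderiv k (τ (I.erase k))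

/-- The radial vector field `R = Σ_k x_k ∂/∂x_k`. -/
def radial (n : ℕ) : Fin n → S n := fun k => X k

/-- The unit `1 ∈ Ω⁰`. -/
def oneForm (n : ℕ) : Ω n := fun I => if I = ∅ then 1 else 0

/-- A polynomial regarded as a `0`-form. -/
def ofPoly (f : S n) : Ω n := fun I => if I = ∅ then f else 0

/-- The basic `1`-form `dx_k`. -/
def dx (k : Fin n) : Ω n := fun I => if I = {k} then 1 else 0

/-- `τ` is an `r`-form, i.e. `τ ∈ Ω^r`. -/
def IsForm (τ : Ω n) (r : ℕ) : Prop := ∀ I : Finset (Fin n), I.card ≠ r → τ I = 0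

/-- `τ ∈ Ω^z` for an integer `z` (so `τ = 0` when `z < 0`). -/
def IsFormZ (τ : Ω n) (z : ℤ) : Prop := ∀ I : Finset (Fin n), (I.card : ℤ) ≠ z → τ I = 0

/-- `τ ∈ Ω^r(b)`: an `r`-form, homogeneous of total degree `b`, where each `x_i` and each
`dx_i` has degree `1` (this is the grading by the Lie derivative along the radial field). -/
def IsHomogForm (τ : Ω n) (r b : ℕ) : Prop :=
  IsForm τ r ∧ ∀ (I : Finset (Fin n)) (m : Fin n →₀ ℕ),
    coeff m (τ I) ≠ 0 → (∑ i ∈ m.support, m i) + I.card = b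

/-- The coordinate vector field `∂/∂x_k`. -/
def coordVF (n : ℕ) (k : Fin n) : Fin n → S n := fun j => if j = k then 1 else 0

/-- Contraction `i_L` with a vector valued differential form `L ∈ Ω^{q+1} ⊗_S T`,
encoded by its components `L k ∈ Ω^{q+1}` with respect to the basis `∂/∂x_k` of `T`,
so `L = Σ_k (L k) ⊗ ∂/∂x_k` and `i_L τ = Σ_k (L k) ∧ i_{∂/∂x_k} τ`. -/
def vcontr (L : Fin n → Ω n) (τ : Ω n) : Ω n :=
  ∑ k : Fin n, wedge (L k) (contr (coordVF n k) τ)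

/-- The Lie derivative `L_K = [i_K, d] = i_K ∘ d + (-1)^q d ∘ i_K` with respect to a vector
valued form `K ∈ Ω^q ⊗_S T` (here `i_K` has degree `q - 1` and `d` has degree `1`). -/
def lieD (q : ℤ) (K : Fin n → Ω n) (τ : Ω n) : Ω n :=
  vcontr K (extd τ) + ((-1 : ℂ) ^ q) • extd (vcontr K τ)

/-- The identity vector valued `1`-form `Id = Σ_k dx_k ⊗ ∂/∂x_k ∈ Ω¹ ⊗_S T`. -/
def idVF (n : ℕ) : Fin n → Ω n := fun k => dx k

/-- `D : Ω → Ω` is a (ℂ-linear) derivation of degree `q`. -/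
structure IsDerivationOfDegree (D : Ω n → Ω n) (q : ℤ) : Prop where
  map_add : ∀ μ τ : Ω n, D (μ + τ) = D μ + D τ
  map_smul : ∀ (a : ℂ) (τ : Ω n), D (a • τ) = a • D τ
  map_degree : ∀ (r : ℕ) (τ : Ω n), IsForm τ r → IsFormZ (D τ) ((r : ℤ) + q)
  leibniz : ∀ (r : ℕ) (μ τ : Ω n), IsForm μ r →
    D (wedge μ τ) = wedge (D μ) τ + ((-1 : ℂ) ^ ((r : ℤ) * q)) • wedge μ (D τ)

/-- `D : Ω → Ω` is a differential operator of order `1` and degree `q`, i.e. a ℂ-linear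
map of degree `q` with `[[D, λ_μ], λ_τ] = 0` for all `μ, τ ∈ Ω` (stated on homogeneous
`μ ∈ Ω^r`, `τ ∈ Ω^s`, with the graded commutator signs). -/
structure IsDiffOpOfDegree (D : Ω n → Ω n) (q : ℤ) : Prop where
  map_add : ∀ μ τ : Ω n, D (μ + τ) = D μ + D τ
  map_smul : ∀ (a : ℂ) (τ : Ω n), D (a • τ) = a • D τ
  map_degree : ∀ (r : ℕ) (τ : Ω n), IsForm τ r → IsFormZ (D τ) ((r : ℤ) + q)
  order_one : ∀ (r s : ℕ) (μ τ : Ω n), IsForm μ r → IsForm τ s → ∀ σ : Ω n,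
    D (wedge μ (wedge τ σ)) - ((-1 : ℂ) ^ (q * (r : ℤ))) • wedge μ (D (wedge τ σ)) -
      ((-1 : ℂ) ^ ((q + (r : ℤ)) * (s : ℤ))) •
        (wedge τ (D (wedge μ σ)) - ((-1 : ℂ) ^ (q * (r : ℤ))) • wedge τ (wedge μ (D σ))) = 0

/-- The deformed action `f · τ = α(r,b,c)·fτ + β(r,b,c)·df ∧ i_R τ` of a homogeneous
polynomial `f ∈ S(c)` on `τ ∈ Ω^r(b)`, for given scalar families `α`, `β`. -/
def defAct (α β : ℕ → ℕ → ℕ → ℂ) (r b c : ℕ) (f : S n) (τ : Ω n) : Ω n :=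
  α r b c • (f • τ) + β r b c • wedge (extd (ofPoly f)) (contr (radial n) τ)

/-- The differential operator `ω̃₁ ∧ L_Id + ω̃₂ ∧ i_Id + λ_μ̃`, evaluated on `τ ∈ Ω^r`:
`τ ↦ ω̃₁ ∧ dτ + r · ω̃₂ ∧ τ + μ̃ ∧ τ`. -/
def opId (ω₁ ω₂ μ : Ω n) (r : ℕ) (τ : Ω n) : Ω n :=
  wedge ω₁ (extd τ) + (r : ℂ) • wedge ω₂ τ + wedge μ τ

/-- The quantity `b - a·(r/q + (-1)^q t)`. -/
def denomA (q a : ℕ) (t : ℂ) (r b : ℕ) : ℂ :=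
  (b : ℂ) - (a : ℂ) * ((r : ℂ) / (q : ℂ) + (-1 : ℂ) ^ q * t)

/-- `α(r,b,c) = (b - a(r/q + (-1)^q t)) / (b + c - a(r/q + (-1)^q t))`. -/
def alphaA (q a : ℕ) (t : ℂ) (r b c : ℕ) : ℂ :=
  denomA q a t r b / (denomA q a t r b + (c : ℂ))

/-- `β(r,b,c) = α(r,b,c) / (b - a(r/q + (-1)^q t))`. -/
def betaA (q a : ℕ) (t : ℂ) (r b c : ℕ) : ℂ :=
  alphaA q a t r b c / denomA q a t r b

/-- A linearizable differential operator
`D = ω₁ ∧ L_Id + ((1/q)dω₁ + ω₂) ∧ i_Id + (t·λ_{dω₁} + λ_μ)`, evaluated on `τ ∈ Ω^r`. -/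
def linOp (q : ℕ) (t : ℂ) (ω₁ ω₂ μ : Ω n) (r : ℕ) (τ : Ω n) : Ω n :=
  wedge ω₁ (extd τ) + (r : ℂ) • wedge ((q : ℂ)⁻¹ • extd ω₁ + ω₂) τ +
    wedge (t • extd ω₁ + μ) τ

/-- The deformed action linearizing the exterior differential:
`f ·_d τ = (b/(b+c))·(fτ + (1/b)·df ∧ i_R τ)`, with `f ·_d τ = fτ` when `b = 0`
(in particular when `b = c = 0`). -/
def dotdT (b c : ℕ) (f : S n) (τ : Ω n) : Ω n :=
  if b = 0 then f • τ
  else ((b : ℂ) / ((b : ℂ) + (c : ℂ))) •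
    (f • τ + ((b : ℂ))⁻¹ • wedge (extd (ofPoly f)) (contr (radial n) τ))

/-- The deformed action linearizing the exterior differential:
`f ·_d τ = (b/(b+c))·(fτ + (1/b)·df ∧ i_R τ)`, with the usual product when `b = c = 0`. -/
def dotd (b c : ℕ) (f : S n) (τ : Ω n) : Ω n :=
  if b = 0 ∧ c = 0 then f • τ
  else ((b : ℂ) / ((b : ℂ) + (c : ℂ))) •
    (f • τ + ((b : ℂ))⁻¹ • wedge (extd (ofPoly f)) (contr (radial n) τ))

/-- `κ(r) = (r+1)/2`. -/
def kapC (r : ℕ) : ℂ := ((r : ℂ) + 1) / 2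

/-- The differential operator `ω△ : Ω^r → Ω^{r+2}`, `ω△τ = ω ∧ dτ + κ(r)·dω ∧ τ`. -/
def triOp (ω : Ω n) (r : ℕ) (τ : Ω n) : Ω n :=
  wedge ω (extd τ) + kapC r • wedge (extd ω) τ

/-- The deformed action linearizing `ω△`:
`f ·_{ω△} τ = (1/(b+c-κ(r)a))·[(b-κ(r)a)·fτ + df ∧ i_R τ]`. -/
def triAct (a r b c : ℕ) (f : S n) (τ : Ω n) : Ω n :=
  ((b : ℂ) + (c : ℂ) - kapC r * (a : ℂ))⁻¹ •
    (((b : ℂ) - kapC r * (a : ℂ)) • (f • τ) + wedge (extd (ofPoly f)) (contr (radial n) τ))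

/-- The Lie derivative `L_X ω = i_X (dω) + d (i_X ω)` along a vector field `X`. -/
def lieVF (X : Fin n → S n) (ω : Ω n) : Ω n := contr X (extd ω) + extd (contr X ω)

end

/-!
An operator of order one is determined by its values on `1`, on the coordinates `x_j` and on the
differentials `dx_j`: evaluating `[[P, λ_μ], λ_τ] = 0` at `1` expresses `P (μ ∧ τ)` through
`P μ`, `P τ` and `P 1`, and `Ω` is spanned over `ℂ` by the products `f ∧ dx_{i₁} ∧ … ∧ dx_{iᵣ}`,
where `f` is built from constants and the `x_j` by sums and products. The operator
`L_K + i_L + λ_μ` satisfies the same identity for `μ = f` and `μ = dx_j`, and takes the values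
`μ`, `K_j + x_j μ` and `(-1)^q dK_j + L_j + μ ∧ dx_j` on `1`, `x_j` and `dx_j`. Choosing `μ = D 1`, `K_j = D x_j - x_j μ`
and `L_j = D dx_j - (-1)^q dK_j - μ ∧ dx_j` therefore gives `D = L_K + i_L + λ_μ`, and the same
three values recover `(K, L, μ)` from the operator, which gives uniqueness.
-/

open Finset

noncomputable section

variable {n : ℕ}

def invCount (I J : Finset (Fin n)) : ℕ := ∑ i ∈ I, #{j ∈ J | j < i}

lemma sgnMerge_cast (I J : Finset (Fin n)) :
    ((sgnMerge I J : ℤ) : S n) = (-1) ^ invCount I J := by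
  simp [sgnMerge, invCount]

lemma invCount_empty_left (J : Finset (Fin n)) : invCount ∅ J = 0 := by simp [invCount]

lemma invCount_empty_right (I : Finset (Fin n)) : invCount I ∅ = 0 := by simp [invCount]

lemma invCount_singleton_left (k : Fin n) (J : Finset (Fin n)) :
    invCount {k} J = #{j ∈ J | j < k} := by simp [invCount]

lemma invCount_union_left {A B : Finset (Fin n)} (C : Finset (Fin n)) (h : Disjoint A B) :
    invCount (A ∪ B) C = invCount A C + invCount B C :=
  sum_union h

lemma invCount_union_right (A : Finset (Fin n)) {B C : Finset (Fin n)} (h : Disjoint B C) :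
    invCount A (B ∪ C) = invCount A B + invCount A C := by
  simp only [invCount, ← sum_add_distrib, filter_union,
    card_union_of_disjoint (disjoint_filter_filter h)]

lemma invCount_add_invCount {A B : Finset (Fin n)} (h : Disjoint A B) :
    invCount A B + invCount B A = #A * #B := by
  simp only [invCount, card_filter]
  rw [sum_comm (s := B) (t := A), ← sum_add_distrib, ← smul_eq_mul, ← sum_const]
  refine sum_congr rfl fun i hi => ?_
  rw [← sum_add_distrib, card_eq_sum_ones]
  refine sum_congr rfl fun j hj => ?_
  have hji : j ≠ i := by rintro rfl; exact disjoint_left.mp h hi hj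
  rcases hji.lt_or_gt with hlt | hgt
  · simp [hlt, hlt.not_gt]
  · simp [hgt, hgt.not_gt]

lemma neg_one_pow_eq_of_mod_two_eq {R : Type*} [Ring R] {a b : ℕ} (h : a % 2 = b % 2) :
    (-1 : R) ^ a = (-1) ^ b := by
  rw [neg_one_pow_eq_pow_mod_two, h, ← neg_one_pow_eq_pow_mod_two]

lemma neg_one_pow_eq_neg_of_mod_two_ne {R : Type*} [Ring R] {a b : ℕ} (h : a % 2 ≠ b % 2) :
    (-1 : R) ^ a = -(-1) ^ b := by
  rw [neg_one_pow_eq_pow_mod_two a, neg_one_pow_eq_pow_mod_two b]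
  rcases Nat.mod_two_eq_zero_or_one a with ha | ha <;>
    rcases Nat.mod_two_eq_zero_or_one b with hb | hb <;> simp_all

lemma card_filter_lt_insert {j : Fin n} (k : Fin n) {J : Finset (Fin n)} (hj : j ∉ J) :
    #{x ∈ insert j J | x < k} = (if j < k then 1 else 0) + #{x ∈ J | x < k} := by
  rw [filter_insert]
  split
  · rw [card_insert_of_notMem fun h => hj (mem_filter.mp h).1]
    omega
  · omega

lemma card_filter_lt_of_mem {j : Fin n} (k : Fin n) {J : Finset (Fin n)} (hj : j ∈ J) :
    #{x ∈ J | x < k} = (if j < k then 1 else 0) + #{x ∈ J.erase j | x < k} := by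
  conv_lhs => rw [← insert_erase hj]
  exact card_filter_lt_insert k (notMem_erase j J)

section Linearity

variable {R : Type*} [CommSemiring R] [Algebra R (S n)]

lemma wedge_add_left (a b c : Ω n) : wedge (a + b) c = wedge a c + wedge b c := by
  funext K; simp only [wedge, Pi.add_apply, ← sum_add_distrib]
  exact sum_congr rfl fun I _ => by ring

lemma wedge_add_right (a b c : Ω n) : wedge a (b + c) = wedge a b + wedge a c := by
  funext K; simp only [wedge, Pi.add_apply, ← sum_add_distrib]
  exact sum_congr rfl fun I _ => by ring

lemma wedge_sub_right (a b c : Ω n) : wedge a (b - c) = wedge a b - wedge a c := by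
  funext K; simp only [wedge, Pi.sub_apply, ← sum_sub_distrib]
  exact sum_congr rfl fun I _ => by ring

lemma wedge_smul_left (c : R) (a b : Ω n) : wedge (c • a) b = c • wedge a b := by
  funext K; simp only [wedge, Pi.smul_apply, Algebra.smul_def, mul_sum]
  exact sum_congr rfl fun I _ => by ring

lemma wedge_smul_right (c : R) (a b : Ω n) : wedge a (c • b) = c • wedge a b := by
  funext K; simp only [wedge, Pi.smul_apply, Algebra.smul_def, mul_sum]
  exact sum_congr rfl fun I _ => by ring

end Linearity

lemma wedge_zero_left (a : Ω n) : wedge 0 a = 0 := by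
  funext K; simp [wedge]

lemma wedge_zero_right (a : Ω n) : wedge a 0 = 0 := by
  funext K; simp [wedge]

lemma wedge_sum_left {ι : Type*} (s : Finset ι) (a : ι → Ω n) (b : Ω n) :
    wedge (∑ i ∈ s, a i) b = ∑ i ∈ s, wedge (a i) b :=
  map_sum (AddMonoidHom.mk' (wedge · b) fun x y => wedge_add_left x y b) a s

lemma wedge_sum_right {ι : Type*} (s : Finset ι) (a : Ω n) (b : ι → Ω n) :
    wedge a (∑ i ∈ s, b i) = ∑ i ∈ s, wedge a (b i) :=
  map_sum (AddMonoidHom.mk' (wedge a) (wedge_add_right a)) b s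

lemma invCount_sdiff_add_invCount {I J K : Finset (Fin n)} (hJI : J ⊆ I) (hIK : I ⊆ K) :
    invCount I (K \ I) + invCount J (I \ J) = invCount J (K \ J) + invCount (I \ J) (K \ I) := by
  have e1 := invCount_union_left (K \ I) (disjoint_sdiff : Disjoint J (I \ J))
  have e2 := invCount_union_right J
    (disjoint_of_subset_right sdiff_subset sdiff_disjoint : Disjoint (K \ I) (I \ J))
  rw [union_sdiff_of_subset hJI] at e1
  rw [sdiff_union_sdiff_cancel hIK hJI] at e2
  omega

/-- Both sides are sums over chains `J ⊆ I ⊆ K`, matched by `(I, J) ↦ (J, I \ J)`. -/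
lemma wedge_assoc (a b c : Ω n) : wedge (wedge a b) c = wedge a (wedge b c) := by
  funext K
  simp only [wedge, sum_mul, mul_sum, sum_sigma']
  refine sum_nbij' (fun p => ⟨p.2, p.1 \ p.2⟩) (fun p => ⟨p.1 ∪ p.2, p.1⟩) ?_ ?_ ?_ ?_ ?_
  · rintro ⟨I, J⟩ hp
    simp only [mem_sigma, mem_powerset] at hp ⊢
    exact ⟨hp.2.trans hp.1, sdiff_subset_sdiff hp.1 le_rfl⟩
  · rintro ⟨J, J'⟩ hp
    simp only [mem_sigma, mem_powerset] at hp ⊢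
    exact ⟨union_subset hp.1 (hp.2.trans sdiff_subset), subset_union_left⟩
  · rintro ⟨I, J⟩ hp
    simp only [mem_sigma, mem_powerset] at hp
    simp [union_sdiff_of_subset hp.2]
  · rintro ⟨J, J'⟩ hp
    simp only [mem_sigma, mem_powerset] at hp
    simp [union_sdiff_cancel_left (disjoint_of_subset_right hp.2 disjoint_sdiff)]
  · rintro ⟨I, J⟩ hp
    simp only [mem_sigma, mem_powerset] at hp
    simp only [sdiff_sdiff_sdiff_cancel_right hp.2, sgnMerge_cast]
    have hsign : (-1 : S n) ^ invCount I (K \ I) * (-1) ^ invCount J (I \ J) =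
        (-1) ^ invCount J (K \ J) * (-1) ^ invCount (I \ J) (K \ I) := by
      rw [← pow_add, ← pow_add, invCount_sdiff_add_invCount hp.2 hp.1]
    linear_combination (a J * b (I \ J) * c (K \ I)) * hsign

lemma wedge_comm {a b : Ω n} {r s : ℕ} (ha : IsForm a r) (hb : IsForm b s) :
    wedge a b = ((-1 : ℂ) ^ (r * s)) • wedge b a := by
  funext K
  simp only [wedge, Pi.smul_apply, smul_sum]
  refine sum_nbij' (K \ ·) (K \ ·) (fun _ _ => mem_powerset.mpr sdiff_subset)
    (fun _ _ => mem_powerset.mpr sdiff_subset)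
    (fun I hI => Finset.sdiff_sdiff_eq_self (mem_powerset.mp hI))
    (fun I hI => Finset.sdiff_sdiff_eq_self (mem_powerset.mp hI)) fun I hI => ?_
  rw [Finset.sdiff_sdiff_eq_self (mem_powerset.mp hI)]
  by_cases hr : #I = r
  swap
  · simp [ha I hr]
  by_cases hs : #(K \ I) = s
  swap
  · simp [hb _ hs]
  have hcount := invCount_add_invCount (disjoint_sdiff : Disjoint I (K \ I))
  rw [hr, hs] at hcount
  have hsign : (-1 : S n) ^ invCount I (K \ I) = (-1) ^ (r * s) * (-1) ^ invCount (K \ I) I := by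
    rw [← pow_add]
    exact neg_one_pow_eq_of_mod_two_eq (by omega)
  rw [sgnMerge_cast, sgnMerge_cast, hsign, Algebra.smul_def]
  simp only [map_pow, map_neg, map_one]
  ring

lemma oneForm_eq_ofPoly : oneForm n = ofPoly 1 := rfl

lemma ofPoly_eq_smul_oneForm (f : S n) : ofPoly f = f • oneForm n := by
  funext I; simp only [ofPoly, oneForm, Pi.smul_apply, smul_eq_mul]; split <;> simp

lemma ofPoly_add (f g : S n) : ofPoly (f + g) = ofPoly f + ofPoly g := by
  simp only [ofPoly_eq_smul_oneForm, add_smul]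

lemma ofPoly_C (a : ℂ) : ofPoly (C a : S n) = a • oneForm n := by
  rw [ofPoly_eq_smul_oneForm, ← algebraMap_eq, algebraMap_smul]

lemma wedge_ofPoly_left (f : S n) (σ : Ω n) : wedge (ofPoly f) σ = f • σ := by
  funext K
  rw [wedge, sum_eq_single (∅ : Finset (Fin n))]
  · simp [ofPoly, sgnMerge_cast, invCount_empty_left]
  · intro I _ hI; simp [ofPoly, hI]
  · intro h; exact absurd (empty_mem_powerset K) h

lemma wedge_ofPoly_right (σ : Ω n) (f : S n) : wedge σ (ofPoly f) = f • σ := by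
  funext K
  rw [wedge, sum_eq_single K]
  · simp [ofPoly, sgnMerge_cast, invCount_empty_right, mul_comm]
  · intro I hI hIK
    have : K \ I ≠ ∅ := by
      rw [Ne, sdiff_eq_empty_iff_subset]
      exact fun hKI => hIK (Subset.antisymm (mem_powerset.mp hI) hKI)
    simp [ofPoly, this]
  · intro h; exact absurd (mem_powerset_self K) h

lemma wedge_ofPoly_ofPoly (f g : S n) : wedge (ofPoly f) (ofPoly g) = ofPoly (f * g) := by
  rw [wedge_ofPoly_left, ofPoly_eq_smul_oneForm, ofPoly_eq_smul_oneForm, smul_smul]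

lemma wedge_oneForm_left (σ : Ω n) : wedge (oneForm n) σ = σ := by
  rw [oneForm_eq_ofPoly, wedge_ofPoly_left, one_smul]

lemma wedge_oneForm_right (σ : Ω n) : wedge σ (oneForm n) = σ := by
  rw [oneForm_eq_ofPoly, wedge_ofPoly_right, one_smul]

lemma IsForm.isFormZ {a : Ω n} {r : ℕ} (h : IsForm a r) : IsFormZ a r :=
  fun I hI => h I fun e => hI (congrArg _ e)

lemma IsFormZ.isForm {a : Ω n} {r : ℕ} (h : IsFormZ a r) : IsForm a r :=
  fun I hI => h I (by exact_mod_cast hI)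

lemma IsFormZ.eq_zero_of_neg {a : Ω n} {z : ℤ} (h : IsFormZ a z) (hz : z < 0) : a = 0 := by
  funext I; exact h I (by omega)

lemma IsFormZ.sub {a b : Ω n} {z : ℤ} (ha : IsFormZ a z) (hb : IsFormZ b z) :
    IsFormZ (a - b) z := fun I hI => by simp [ha I hI, hb I hI]

lemma IsFormZ.smul {R : Type*} [SMulZeroClass R (S n)] {a : Ω n} {z : ℤ} (c : R)
    (ha : IsFormZ a z) : IsFormZ (c • a) z := fun I hI => by simp [ha I hI]

lemma IsFormZ.wedge {a b : Ω n} {z w : ℤ} (ha : IsFormZ a z) (hb : IsFormZ b w) :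
    IsFormZ (wedge a b) (z + w) := by
  intro K hK
  refine sum_eq_zero fun I hI => ?_
  have hIK := mem_powerset.mp hI
  by_cases h : (#I : ℤ) = z
  · have : (#(K \ I) : ℤ) ≠ w := by
      rw [card_sdiff_of_subset hIK, Nat.cast_sub (card_le_card hIK)]; omega
    rw [hb _ this, mul_zero]
  · rw [ha I h, mul_zero, zero_mul]

lemma IsFormZ.extd {a : Ω n} {z : ℤ} (ha : IsFormZ a z) : IsFormZ (extd a) (z + 1) := by
  intro I hI
  refine sum_eq_zero fun k hk => ?_
  have : (#(I.erase k) : ℤ) ≠ z := by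
    rw [card_erase_of_mem hk, Nat.cast_sub (card_pos.mpr ⟨k, hk⟩)]; omega
  rw [ha _ this, map_zero, mul_zero]

lemma wedge_comm_of_isFormZ {a b : Ω n} {z : ℤ} {s : ℕ} (ha : IsFormZ a z) (hb : IsForm b s) :
    wedge a b = ((-1 : ℂ) ^ (z * s)) • wedge b a := by
  rcases lt_or_ge z 0 with hz | hz
  · rw [ha.eq_zero_of_neg hz, wedge_zero_left, wedge_zero_right, smul_zero]
  · lift z to ℕ using hz
    rw [← Nat.cast_mul, zpow_natCast]
    exact wedge_comm ha.isForm hb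

def dxI (I : Finset (Fin n)) : Ω n := fun J => if J = I then 1 else 0

lemma dxI_empty : dxI (∅ : Finset (Fin n)) = oneForm n := rfl

lemma dxI_singleton (k : Fin n) : dxI {k} = dx k := rfl

lemma isForm_dxI (I : Finset (Fin n)) : IsForm (dxI I) #I := by
  intro J hJ; rw [dxI, if_neg (by rintro rfl; exact hJ rfl)]

lemma isForm_dx (k : Fin n) : IsForm (dx k) 1 := by
  simpa [← dxI_singleton] using isForm_dxI {k}

lemma isForm_ofPoly (f : S n) : IsForm (ofPoly f) 0 := by
  intro J hJ; rw [ofPoly, if_neg (by rintro rfl; exact hJ card_empty)]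

lemma isForm_oneForm : IsForm (oneForm n) 0 := isForm_ofPoly 1

lemma sum_smul_dxI (τ : Ω n) : ∑ I, τ I • dxI I = τ := by
  funext K
  simp [Finset.sum_apply, dxI]

section Linearity

variable {R : Type*} [CommSemiring R] [Algebra R (S n)]

lemma contr_add (X : Fin n → S n) (a b : Ω n) : contr X (a + b) = contr X a + contr X b := by
  funext J; simp only [contr, Pi.add_apply, ← sum_add_distrib]
  exact sum_congr rfl fun k _ => by ring

lemma contr_smul (X : Fin n → S n) (c : R) (a : Ω n) : contr X (c • a) = c • contr X a := by
  funext J; simp only [contr, Pi.smul_apply, Algebra.smul_def, mul_sum]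
  exact sum_congr rfl fun k _ => by ring

lemma extd_add (a b : Ω n) : extd (a + b) = extd a + extd b := by
  funext I; simp only [extd, Pi.add_apply, map_add, ← sum_add_distrib]
  exact sum_congr rfl fun k _ => by ring

lemma extd_sub (a b : Ω n) : extd (a - b) = extd a - extd b := by
  funext I; simp only [extd, Pi.sub_apply, map_sub, ← sum_sub_distrib]
  exact sum_congr rfl fun k _ => by ring

lemma extd_const_smul (c : ℂ) (a : Ω n) : extd (c • a) = c • extd a := by
  funext I; simp only [extd, Pi.smul_apply, smul_eq_C_mul, mul_sum, pderiv_C_mul]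
  exact sum_congr rfl fun k _ => by ring

lemma extd_zero : extd (0 : Ω n) = 0 := by
  funext I; simp [extd]

lemma extd_sum {ι : Type*} (s : Finset ι) (f : ι → Ω n) :
    extd (∑ i ∈ s, f i) = ∑ i ∈ s, extd (f i) :=
  map_sum (AddMonoidHom.mk' extd extd_add) f s

end Linearity

lemma wedge_dx_apply (k : Fin n) (σ : Ω n) (K : Finset (Fin n)) :
    wedge (dx k) σ K = if k ∈ K then (-1) ^ #{j ∈ K | j < k} * σ (K.erase k) else 0 := by
  rw [wedge]
  split_ifs with hk
  · rw [sum_eq_single_of_mem {k} (mem_powerset.mpr (singleton_subset_iff.mpr hk))]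
    · have hfilter : #{j ∈ K.erase k | j < k} = #{j ∈ K | j < k} := by
        simpa using (card_filter_lt_of_mem k hk).symm
      simp [dx, sgnMerge_cast, invCount_singleton_left, ← erase_eq, hfilter]
    · intro I _ hI
      rw [dx, if_neg hI, mul_zero, zero_mul]
  · refine sum_eq_zero fun I hI => ?_
    have : I ≠ {k} := by
      rintro rfl; exact hk (singleton_subset_iff.mp (mem_powerset.mp hI))
    rw [dx, if_neg this, mul_zero, zero_mul]

lemma contr_coordVF_apply (k : Fin n) (τ : Ω n) (J : Finset (Fin n)) :
    contr (coordVF n k) τ J = if k ∈ J then 0 else (-1) ^ #{j ∈ J | j < k} * τ (insert k J) := by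
  rw [contr]
  split_ifs with hk
  · refine sum_eq_zero fun m hm => ?_
    have : m ≠ k := by rintro rfl; exact mem_compl.mp hm hk
    rw [coordVF, if_neg this, mul_zero, zero_mul]
  · rw [sum_eq_single_of_mem k (mem_compl.mpr hk)]
    · rw [coordVF, if_pos rfl, mul_one]
    · intro m _ hm
      rw [coordVF, if_neg hm, mul_zero, zero_mul]

lemma contr_coordVF_wedge_dx_self (j : Fin n) (σ : Ω n) :
    contr (coordVF n j) (wedge (dx j) σ) = σ - wedge (dx j) (contr (coordVF n j) σ) := by
  funext J
  have hins : #{x ∈ insert j J | x < j} = #{x ∈ J | x < j} := by simp [filter_insert]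
  by_cases hj : j ∈ J
  · have herase : #{x ∈ J.erase j | x < j} = #{x ∈ J | x < j} := by
      simpa using (card_filter_lt_of_mem j hj).symm
    simp [contr_coordVF_apply, wedge_dx_apply, hj, insert_erase, herase, ← mul_assoc, ← pow_add]
  · simp [contr_coordVF_apply, wedge_dx_apply, hj, hins, ← mul_assoc, ← pow_add]

lemma contr_coordVF_wedge_dx_of_ne {j k : Fin n} (hjk : j ≠ k) (σ : Ω n) :
    contr (coordVF n k) (wedge (dx j) σ) = -wedge (dx j) (contr (coordVF n k) σ) := by
  funext J
  by_cases hk : k ∈ J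
  · simp [contr_coordVF_apply, wedge_dx_apply, hk, hjk.symm]
  by_cases hj : j ∈ J
  swap
  · simp [contr_coordVF_apply, wedge_dx_apply, hk, hj, hjk]
  have e1 := card_filter_lt_insert j hk
  have e2 := card_filter_lt_of_mem k hj
  have hsign : (-1 : S n) ^ (#{x ∈ J | x < k} + #{x ∈ insert k J | x < j}) =
      -(-1) ^ (#{x ∈ J | x < j} + #{x ∈ J.erase j | x < k}) := by
    apply neg_one_pow_eq_neg_of_mod_two_ne
    rcases hjk.lt_or_gt with h | h <;> simp only [h, h.not_gt, if_true, if_false] at e1 e2 <;> omega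
  simp only [contr_coordVF_apply, hk, hj, wedge_dx_apply, mem_insert, mem_erase, ne_eq,
    erase_insert_of_ne hjk.symm, Pi.neg_apply, hjk.symm, ↓reduceIte, or_true, not_false_eq_true,
    and_false]
  rw [pow_add, pow_add] at hsign
  linear_combination σ (insert k (J.erase j)) * hsign

lemma contr_coordVF_wedge_dx (k j : Fin n) (σ : Ω n) :
    contr (coordVF n k) (wedge (dx j) σ) =
      (if j = k then σ else 0) - wedge (dx j) (contr (coordVF n k) σ) := by
  split_ifs with h
  · subst h; exact contr_coordVF_wedge_dx_self j σ
  · rw [contr_coordVF_wedge_dx_of_ne h, zero_sub]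

lemma extd_ofPoly (f : S n) : extd (ofPoly f) = ∑ k, pderiv k f • dx k := by
  funext I
  rw [Finset.sum_apply]
  by_cases hI : ∃ m, I = {m}
  · obtain ⟨m, rfl⟩ := hI
    simp [extd, ofPoly, dx, filter_singleton]
  · push Not at hI
    refine (sum_eq_zero fun k hk => ?_).trans (sum_eq_zero fun k _ => by simp [dx, hI k]).symm
    simp [ofPoly, erase_eq_empty_iff, hI k, ne_empty_of_mem hk]

lemma pderiv_neg_one_pow_mul (k : Fin n) (e : ℕ) (p : S n) :
    pderiv k ((-1) ^ e * p) = (-1) ^ e * pderiv k p := by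
  simp

lemma extd_wedge_dx (j : Fin n) (σ : Ω n) :
    extd (wedge (dx j) σ) = -wedge (dx j) (extd σ) := by
  funext K
  rw [Pi.neg_apply, wedge_dx_apply]
  by_cases hj : j ∈ K
  swap
  · rw [if_neg hj, neg_zero]
    refine sum_eq_zero fun k hk => ?_
    rw [wedge_dx_apply, if_neg fun h => hj (mem_of_mem_erase h), map_zero, mul_zero]
  rw [if_pos hj, extd, ← sum_erase_add K _ hj, wedge_dx_apply, if_neg (notMem_erase j K),
    map_zero, mul_zero, add_zero, extd, mul_sum, ← sum_neg_distrib]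
  refine sum_congr rfl fun k hk => ?_
  obtain ⟨hkj, hkK⟩ := mem_erase.mp hk
  have e1 := card_filter_lt_of_mem j hkK
  have e2 := card_filter_lt_of_mem k hj
  have hsign : (-1 : S n) ^ (#{x ∈ K | x < k} + #{x ∈ K.erase k | x < j}) =
      -(-1) ^ (#{x ∈ K | x < j} + #{x ∈ K.erase j | x < k}) := by
    apply neg_one_pow_eq_neg_of_mod_two_ne
    rcases hkj.lt_or_gt with h | h <;> simp only [h, h.not_gt, if_true, if_false] at e1 e2 <;> omega
  rw [wedge_dx_apply, if_pos (mem_erase.mpr ⟨hkj.symm, hj⟩), erase_right_comm,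
    pderiv_neg_one_pow_mul]
  rw [pow_add, pow_add] at hsign
  linear_combination pderiv k (σ ((K.erase j).erase k)) * hsign

lemma extd_smul (f : S n) (σ : Ω n) :
    extd (f • σ) = wedge (extd (ofPoly f)) σ + f • extd σ := by
  funext I
  simp only [extd_ofPoly, wedge_sum_left, wedge_smul_left, Pi.add_apply, Finset.sum_apply,
    Pi.smul_apply, wedge_dx_apply, smul_eq_mul, mul_ite, mul_zero, sum_ite_mem, univ_inter]
  simp only [extd, Pi.smul_apply, smul_eq_mul, mul_sum, ← sum_add_distrib, Derivation.leibniz]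
  exact sum_congr rfl fun k _ => by ring

lemma extd_dxI (I : Finset (Fin n)) : extd (dxI I) = 0 := by
  funext K; simp [extd, dxI, apply_ite]

lemma extd_oneForm : extd (oneForm n) = 0 := extd_dxI ∅

lemma extd_dx (k : Fin n) : extd (dx k) = 0 := extd_dxI {k}

lemma wedge_dx_dxI {j : Fin n} {I : Finset (Fin n)} (hj : j ∉ I) :
    wedge (dx j) (dxI I) = ((-1 : ℂ) ^ #{x ∈ I | x < j}) • dxI (insert j I) := by
  funext K
  rw [Pi.smul_apply, wedge_dx_apply, dxI, dxI, ← algebraMap_smul (S n), smul_eq_mul]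
  by_cases hK : K = insert j I
  · subst hK
    simp [erase_insert hj, filter_insert]
  · rw [if_neg hK, mul_zero]
    split_ifs with hjK hKI <;> simp only [mul_one, mul_zero]
    exact absurd (hKI ▸ (insert_erase hjK).symm) hK

lemma dxI_insert {j : Fin n} {I : Finset (Fin n)} (hj : j ∉ I) :
    dxI (insert j I) = ((-1 : ℂ) ^ #{x ∈ I | x < j}) • wedge (dx j) (dxI I) := by
  rw [wedge_dx_dxI hj, smul_smul, ← pow_add, Even.neg_one_pow ⟨_, rfl⟩, one_smul]

lemma extd_wedge_dxI (I : Finset (Fin n)) (τ : Ω n) :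
    extd (wedge (dxI I) τ) = ((-1 : ℂ) ^ #I) • wedge (dxI I) (extd τ) := by
  induction I using Finset.induction_on with
  | empty => simp [dxI_empty, wedge_oneForm_left]
  | @insert j I hj ih =>
    simp only [dxI_insert hj, card_insert_of_notMem hj, wedge_smul_left, extd_const_smul,
      wedge_assoc, extd_wedge_dx, ih, wedge_smul_right, pow_succ]
    module

lemma extd_wedge {μ : Ω n} {r : ℕ} (hμ : IsForm μ r) (τ : Ω n) :
    extd (wedge μ τ) = wedge (extd μ) τ + ((-1 : ℂ) ^ r) • wedge μ (extd τ) := by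
  conv_lhs => rw [← sum_smul_dxI μ]
  conv_rhs => rw [← sum_smul_dxI μ]
  simp only [wedge_sum_left, extd_sum, smul_sum, ← sum_add_distrib]
  refine sum_congr rfl fun I _ => ?_
  rw [wedge_smul_left, extd_smul, extd_smul, extd_dxI, smul_zero, add_zero, extd_wedge_dxI,
    wedge_assoc, wedge_smul_left]
  by_cases h : μ I = 0
  · simp [h]
  · rw [show #I = r by by_contra hI; exact h (hμ I hI), smul_comm]

lemma extd_wedge_of_isFormZ {μ : Ω n} {z : ℤ} (hμ : IsFormZ μ z) (τ : Ω n) :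
    extd (wedge μ τ) = wedge (extd μ) τ + ((-1 : ℂ) ^ z) • wedge μ (extd τ) := by
  rcases lt_or_ge z 0 with hz | hz
  · simp [hμ.eq_zero_of_neg hz, wedge_zero_left, extd_zero]
  · lift z to ℕ using hz
    rw [zpow_natCast]
    exact extd_wedge hμ.isForm τ

section Linearity

variable {R : Type*} [CommSemiring R] [Algebra R (S n)]

lemma vcontr_add (M : Fin n → Ω n) (a b : Ω n) : vcontr M (a + b) = vcontr M a + vcontr M b := by
  simp only [vcontr, contr_add, wedge_add_right, sum_add_distrib]

lemma vcontr_smul (M : Fin n → Ω n) (c : R) (a : Ω n) : vcontr M (c • a) = c • vcontr M a := by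
  simp only [vcontr, contr_smul, wedge_smul_right, smul_sum]

lemma vcontr_sum (M : Fin n → Ω n) {ι : Type*} (s : Finset ι) (f : ι → Ω n) :
    vcontr M (∑ i ∈ s, f i) = ∑ i ∈ s, vcontr M (f i) :=
  map_sum (AddMonoidHom.mk' (vcontr M) (vcontr_add M)) f s

lemma vcontr_zero (M : Fin n → Ω n) : vcontr M 0 = 0 :=
  map_zero (AddMonoidHom.mk' (vcontr M) (vcontr_add M))

end Linearity

lemma contr_ofPoly (X : Fin n → S n) (f : S n) : contr X (ofPoly f) = 0 := by
  funext J; simp [contr, ofPoly]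

lemma vcontr_ofPoly (M : Fin n → Ω n) (f : S n) : vcontr M (ofPoly f) = 0 := by
  simp [vcontr, contr_ofPoly, wedge_zero_right]

lemma vcontr_oneForm (M : Fin n → Ω n) : vcontr M (oneForm n) = 0 := vcontr_ofPoly M 1

lemma contr_coordVF_dx (k j : Fin n) :
    contr (coordVF n k) (dx j) = if j = k then oneForm n else 0 := by
  have h := contr_coordVF_wedge_dx k j (oneForm n)
  rwa [wedge_oneForm_right, oneForm_eq_ofPoly, contr_ofPoly, wedge_zero_right, sub_zero,
    ← oneForm_eq_ofPoly] at h

lemma vcontr_dx (M : Fin n → Ω n) (j : Fin n) : vcontr M (dx j) = M j := by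
  simp [vcontr, contr_coordVF_dx, apply_ite, wedge_zero_right, wedge_oneForm_right]

lemma vcontr_extd_ofPoly (M : Fin n → Ω n) (f : S n) :
    vcontr M (extd (ofPoly f)) = ∑ k, pderiv k f • M k := by
  simp only [extd_ofPoly, vcontr_sum, vcontr_smul, vcontr_dx]

lemma vcontr_wedge_dx {M : Fin n → Ω n} {m : ℤ} (hM : ∀ k, IsFormZ (M k) m) (j : Fin n)
    (ρ : Ω n) :
    vcontr M (wedge (dx j) ρ) = wedge (M j) ρ - ((-1 : ℂ) ^ m) • wedge (dx j) (vcontr M ρ) := by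
  have hswap (k : Fin n) (σ : Ω n) :
      wedge (M k) (wedge (dx j) σ) = ((-1 : ℂ) ^ m) • wedge (dx j) (wedge (M k) σ) := by
    rw [← wedge_assoc, wedge_comm_of_isFormZ (hM k) (isForm_dx j), Nat.cast_one, mul_one,
      wedge_smul_left, wedge_assoc]
  simp [vcontr, contr_coordVF_wedge_dx, wedge_sub_right, hswap, apply_ite, wedge_zero_right,
    sum_sub_distrib, wedge_sum_right, smul_sum]

lemma vcontr_wedge_extd_ofPoly {M : Fin n → Ω n} {m : ℤ} (hM : ∀ k, IsFormZ (M k) m) (f : S n)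
    (τ : Ω n) :
    vcontr M (wedge (extd (ofPoly f)) τ) =
      ∑ k, pderiv k f • wedge (M k) τ - ((-1 : ℂ) ^ m) • wedge (extd (ofPoly f)) (vcontr M τ) := by
  simp only [extd_ofPoly, wedge_sum_left, wedge_smul_left, vcontr_sum, vcontr_smul,
    vcontr_wedge_dx hM, smul_sub, sum_sub_distrib, smul_comm (_ : S n) (_ : ℂ), smul_sum]

lemma lieD_smul {q : ℤ} {K : Fin n → Ω n} (hK : ∀ k, IsFormZ (K k) q) (f : S n) (τ : Ω n) :
    lieD q K (f • τ) = f • lieD q K τ + ∑ k, pderiv k f • wedge (K k) τ := by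
  rw [lieD, extd_smul, vcontr_add, vcontr_wedge_extd_ofPoly hK, vcontr_smul, vcontr_smul,
    extd_smul, smul_add, lieD, smul_add, smul_comm f]
  abel

/-- The order-one condition `[[P, λ_μ], λ_τ] 1 = 0` for an `r`-form `μ` and all homogeneous `τ`,
solved for `P (μ ∧ τ)`. -/
def OrderOneAt (P : Ω n → Ω n) (q : ℤ) (μ : Ω n) (r : ℕ) : Prop :=
  ∀ (s : ℕ) (τ : Ω n), IsForm τ s →
    P (wedge μ τ) = ((-1 : ℂ) ^ (q * r)) • wedge μ (P τ) +
      ((-1 : ℂ) ^ ((q + r) * s)) •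
        (wedge τ (P μ) - ((-1 : ℂ) ^ (q * r)) • wedge τ (wedge μ (P (oneForm n))))

lemma IsDiffOpOfDegree.isFormZ_apply_ofPoly {D : Ω n → Ω n} {q : ℤ}
    (hD : IsDiffOpOfDegree D q) (f : S n) : IsFormZ (D (ofPoly f)) q := by
  simpa using hD.map_degree 0 _ (isForm_ofPoly f)

lemma IsDiffOpOfDegree.isFormZ_apply_dx {D : Ω n → Ω n} {q : ℤ}
    (hD : IsDiffOpOfDegree D q) (j : Fin n) : IsFormZ (D (dx j)) (q + 1) := by
  simpa [add_comm] using hD.map_degree 1 _ (isForm_dx j)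

lemma IsDiffOpOfDegree.orderOneAt {D : Ω n → Ω n} {q : ℤ} (hD : IsDiffOpOfDegree D q)
    {μ : Ω n} {r : ℕ} (hμ : IsForm μ r) : OrderOneAt D q μ r := by
  intro s τ hτ
  have h := hD.order_one r s μ τ hμ hτ (oneForm n)
  simp only [wedge_oneForm_right] at h
  rwa [sub_sub, sub_eq_zero] at h

def decompOp (q : ℤ) (K L : Fin n → Ω n) (μ τ : Ω n) : Ω n :=
  lieD q K τ + vcontr L τ + wedge μ τ

section DecompOp

variable {q : ℤ} {K L : Fin n → Ω n} {μ : Ω n}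

lemma isLinearMap_decompOp : IsLinearMap ℂ (decompOp q K L μ) where
  map_add a b := by
    simp only [decompOp, lieD, extd_add, vcontr_add, smul_add, wedge_add_right]
    abel
  map_smul c a := by
    simp only [decompOp, lieD, extd_const_smul, vcontr_smul, wedge_smul_right, smul_add,
      smul_comm c]

lemma decompOp_oneForm : decompOp q K L μ (oneForm n) = μ := by
  simp [decompOp, lieD, extd_oneForm, vcontr_oneForm, vcontr_zero, extd_zero, wedge_oneForm_right]

lemma decompOp_ofPoly (f : S n) :
    decompOp q K L μ (ofPoly f) = ∑ k, pderiv k f • K k + f • μ := by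
  simp [decompOp, lieD, vcontr_ofPoly, vcontr_extd_ofPoly, wedge_ofPoly_right, extd_zero]

lemma decompOp_dx (j : Fin n) :
    decompOp q K L μ (dx j) = ((-1 : ℂ) ^ q) • extd (K j) + L j + wedge μ (dx j) := by
  simp [decompOp, lieD, extd_dx, vcontr_dx, vcontr_zero]

lemma decompOp_X (j : Fin n) : decompOp q K L μ (ofPoly (X j)) = K j + (X j : S n) • μ := by
  simp [decompOp_ofPoly, pderiv_X, Pi.single_apply]

lemma decompOp_smul (hK : ∀ k, IsFormZ (K k) q) (f : S n) (τ : Ω n) :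
    decompOp q K L μ (f • τ) = f • decompOp q K L μ τ + ∑ k, pderiv k f • wedge (K k) τ := by
  simp only [decompOp, lieD_smul hK, vcontr_smul, wedge_smul_right, smul_add]
  abel

lemma orderOneAt_decompOp_ofPoly (hK : ∀ k, IsFormZ (K k) q) (f : S n) :
    OrderOneAt (decompOp q K L μ) q (ofPoly f) 0 := by
  intro s τ hτ
  have hswap (k : Fin n) : pderiv k f • wedge (K k) τ =
      ((-1 : ℂ) ^ (q * s)) • wedge τ (pderiv k f • K k) := by
    rw [wedge_comm_of_isFormZ (hK k) hτ, wedge_smul_right, smul_comm]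
  simp only [Nat.cast_zero, mul_zero, zpow_zero, one_smul, add_zero, decompOp_oneForm,
    decompOp_ofPoly, wedge_ofPoly_left, decompOp_smul hK, wedge_add_right, add_sub_cancel_right,
    wedge_sum_right, hswap, smul_sum]

lemma orderOneAt_decompOp_dx (hK : ∀ k, IsFormZ (K k) q) (hL : ∀ k, IsFormZ (L k) (q + 1))
    (hμ : IsFormZ μ q) (j : Fin n) : OrderOneAt (decompOp q K L μ) q (dx j) 1 := by
  intro s τ hτ
  have hdx {a : Ω n} {z : ℤ} (ha : IsFormZ a z) (σ : Ω n) :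
      wedge a (wedge (dx j) σ) = ((-1 : ℂ) ^ z) • wedge (dx j) (wedge a σ) := by
    rw [← wedge_assoc, wedge_comm_of_isFormZ ha (isForm_dx j), Nat.cast_one, mul_one,
      wedge_smul_left, wedge_assoc]
  have hτ' {a : Ω n} {z : ℤ} (ha : IsFormZ a z) :
      wedge a τ = ((-1 : ℂ) ^ (z * s)) • wedge τ a := wedge_comm_of_isFormZ ha hτ
  have hμdx : wedge μ (dx j) = ((-1 : ℂ) ^ q) • wedge (dx j) μ := by
    simpa [wedge_oneForm_right] using hdx hμ (oneForm n)
  rw [Nat.cast_one, mul_one, decompOp_oneForm, decompOp_dx]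
  simp only [decompOp, lieD, extd_wedge_dx, vcontr_wedge_dx hK, vcontr_wedge_dx hL, extd_sub,
    extd_const_smul, extd_wedge_of_isFormZ (hK j), hdx hμ, hμdx, hτ' (hK j).extd, hτ' (hL j),
    zpow_add_one₀ (by norm_num : (-1 : ℂ) ≠ 0), (neg_one_smul ℂ (_ : Ω n)).symm, vcontr_smul,
    smul_sub, smul_add, wedge_add_right, wedge_smul_right, mul_smul]
  rcases Int.even_or_odd q with hq | hq <;> rw [hq.neg_one_zpow] <;> module

lemma decompOp_injective {K' L' : Fin n → Ω n} {μ' : Ω n}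
    (h : decompOp q K L μ = decompOp q K' L' μ') : K = K' ∧ L = L' ∧ μ = μ' := by
  have hμ : μ = μ' := by simpa only [decompOp_oneForm] using congrFun h (oneForm n)
  have hK : K = K' := funext fun j => by
    simpa only [decompOp_X, hμ, add_left_inj] using congrFun h (ofPoly (X j))
  refine ⟨hK, funext fun j => ?_, hμ⟩
  simpa only [decompOp_dx, hK, hμ, add_left_inj, add_right_inj] using congrFun h (dx j)

end DecompOp

section Uniqueness

variable {q : ℤ} {D P : Ω n → Ω n}

lemma eq_on_ofPoly_of_orderOneAt (hD : IsLinearMap ℂ D) (hP : IsLinearMap ℂ P)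
    (hD₀ : ∀ f, OrderOneAt D q (ofPoly f) 0) (hP₀ : ∀ f, OrderOneAt P q (ofPoly f) 0)
    (h1 : D (oneForm n) = P (oneForm n)) (hX : ∀ j, D (ofPoly (X j)) = P (ofPoly (X j)))
    (f : S n) : D (ofPoly f) = P (ofPoly f) := by
  induction f using MvPolynomial.induction_on with
  | C a => rw [ofPoly_C, hD.map_smul, hP.map_smul, h1]
  | add f g hf hg => rw [ofPoly_add, hD.map_add, hP.map_add, hf, hg]
  | mul_X f j hf =>
    rw [← wedge_ofPoly_ofPoly, hD₀ f 0 _ (isForm_ofPoly _), hP₀ f 0 _ (isForm_ofPoly _), hf, hX,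
      h1]

lemma eq_on_dxI_of_orderOneAt (hD : IsLinearMap ℂ D) (hP : IsLinearMap ℂ P)
    (hD₁ : ∀ j, OrderOneAt D q (dx j) 1) (hP₁ : ∀ j, OrderOneAt P q (dx j) 1)
    (h1 : D (oneForm n) = P (oneForm n)) (hdx : ∀ j, D (dx j) = P (dx j))
    (I : Finset (Fin n)) : D (dxI I) = P (dxI I) := by
  induction I using Finset.induction_on with
  | empty => exact h1
  | @insert j I hj ih =>
    rw [dxI_insert hj, hD.map_smul, hP.map_smul, hD₁ j _ _ (isForm_dxI I),
      hP₁ j _ _ (isForm_dxI I), ih, hdx, h1]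

theorem eq_of_orderOneAt (hD : IsLinearMap ℂ D) (hP : IsLinearMap ℂ P)
    (hD₀ : ∀ f, OrderOneAt D q (ofPoly f) 0) (hD₁ : ∀ j, OrderOneAt D q (dx j) 1)
    (hP₀ : ∀ f, OrderOneAt P q (ofPoly f) 0) (hP₁ : ∀ j, OrderOneAt P q (dx j) 1)
    (h1 : D (oneForm n) = P (oneForm n)) (hX : ∀ j, D (ofPoly (X j)) = P (ofPoly (X j)))
    (hdx : ∀ j, D (dx j) = P (dx j)) : D = P := by
  have hsum {F : Ω n → Ω n} (hF : IsLinearMap ℂ F) (τ : Ω n) :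
      F τ = ∑ I, F (wedge (ofPoly (τ I)) (dxI I)) := by
    conv_lhs => rw [← sum_smul_dxI τ]
    simp only [wedge_ofPoly_left]
    exact map_sum (IsLinearMap.mk' F hF) _ _
  funext τ
  rw [hsum hD, hsum hP]
  refine sum_congr rfl fun I _ => ?_
  rw [hD₀ _ _ _ (isForm_dxI I), hP₀ _ _ _ (isForm_dxI I),
    eq_on_ofPoly_of_orderOneAt hD hP hD₀ hP₀ h1 hX,
    eq_on_dxI_of_orderOneAt hD hP hD₁ hP₁ h1 hdx, h1]

end Uniqueness

end

/-- Every differential operator `D` of order `1` and degree `q` on `Ω`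
can be written uniquely as `D = L_K + i_L + λ_μ`, with `K ∈ Ω^q ⊗_S T`,
`L ∈ Ω^{q+1} ⊗_S T` (encoded by components), `μ ∈ Ω^q`, `L_K = [i_K, d]`, and `λ_μ`
left exterior multiplication by `μ`. -/
theorem diffOp_decomposition (n : ℕ) (q : ℤ) (D : Ω n → Ω n)
    (hD : IsDiffOpOfDegree D q) :
    ∃! KLμ : (Fin n → Ω n) × (Fin n → Ω n) × Ω n,
      (∀ k, IsFormZ (KLμ.1 k) q) ∧ (∀ k, IsFormZ (KLμ.2.1 k) (q + 1)) ∧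
      IsFormZ KLμ.2.2 q ∧
      ∀ τ : Ω n, D τ = lieD q KLμ.1 τ + vcontr KLμ.2.1 τ + wedge KLμ.2.2 τ := by
  set μ := D (oneForm n)
  set K : Fin n → Ω n := fun j => D (ofPoly (X j)) - (X j : S n) • μ
  set L : Fin n → Ω n := fun j => D (dx j) - ((-1 : ℂ) ^ q) • extd (K j) - wedge μ (dx j)
  have hμ : IsFormZ μ q := hD.isFormZ_apply_ofPoly 1
  have hK (j : Fin n) : IsFormZ (K j) q := (hD.isFormZ_apply_ofPoly _).sub (hμ.smul _)
  have hL (j : Fin n) : IsFormZ (L j) (q + 1) :=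
    ((hD.isFormZ_apply_dx j).sub ((hK j).extd.smul _)).sub
      (by simpa using hμ.wedge (isForm_dx j).isFormZ)
  have hDecomp : D = decompOp q K L μ :=
    eq_of_orderOneAt ⟨hD.map_add, hD.map_smul⟩ isLinearMap_decompOp
      (fun f => hD.orderOneAt (isForm_ofPoly f)) (fun j => hD.orderOneAt (isForm_dx j))
      (orderOneAt_decompOp_ofPoly hK) (orderOneAt_decompOp_dx hK hL hμ)
      decompOp_oneForm.symm (fun j => by simp [decompOp_X, K])
      (fun j => by simp only [decompOp_dx, L]; abel)
  refine ⟨(K, L, μ), ⟨hK, hL, hμ, congrFun hDecomp⟩, ?_⟩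
  rintro ⟨K', L', μ'⟩ ⟨-, -, -, h'⟩
  have hD' : D = decompOp q K' L' μ' := funext h'
  obtain ⟨rfl, rfl, rfl⟩ := decompOp_injective (hD'.symm.trans hDecomp)
  rfl
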